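/- Let s0,…,s4 and π act on the parameter vector (α0,α1,α2,α3,α4) ∈ ℂ⁵ by: s0: (−α0, α1, α2+α0, α3, α4); s1: (α0, −α1, α2+α1, α3, α4); s2: (α0+α2, α1+α2, −α2, α3+α2, α4); s3: (α0, α1, α2+α3, −α3, α4+2α3); s4: (α0, α1, α2, α3+α4, −α4); π: (α1, α0, α2, α3, α4). Define T1 := π s0 s2 s3 s4 s3 s2 s0, T2 := s0 T1 s0, T3 := s2 T2 s2, T4 := s4 s3 T3 s3 s4 (composition of these parameter actions). Then for every parameter vector satisfying α0+α1+2α2+2α3+α4 = 1: T1(α) = α + (−1,1,0,0,0), T2(α) = α + (1,1,−1,0,0), T3(α) = α + (0,0,1,−1,0), and T4(α) = α + (0,0,0,−1,2). -/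
import Mathlib


/- STATEMENT 2: the translation operators T1 = π s0 s2 s3 s4 s3 s2 s0,
T2 = s0 T1 s0, T3 = s2 T2 s2, T4 = s4 s3 T3 s3 s4 built from the parameter parts
of the Bäcklund transformations of the A7^(2) system act as the indicated
translations on the parameter hyperplane α0+α1+2α2+2α3+α4 = 1.
A word `g1 g2 … gk` acts by applying `g1` first, then `g2`, etc. -/

/-- Parameter space of the A7^(2) system. -/
abbrev P5 := ℂ × ℂ × ℂ × ℂ × ℂ

def s0A7 : P5 → P5 | (a0, a1, a2, a3, a4) => (-a0, a1, a2 + a0, a3, a4)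
def s1A7 : P5 → P5 | (a0, a1, a2, a3, a4) => (a0, -a1, a2 + a1, a3, a4)
def s2A7 : P5 → P5 | (a0, a1, a2, a3, a4) => (a0 + a2, a1 + a2, -a2, a3 + a2, a4)
def s3A7 : P5 → P5 | (a0, a1, a2, a3, a4) => (a0, a1, a2 + a3, -a3, a4 + 2*a3)
def s4A7 : P5 → P5 | (a0, a1, a2, a3, a4) => (a0, a1, a2, a3 + a4, -a4)
def piA7 : P5 → P5 | (a0, a1, a2, a3, a4) => (a1, a0, a2, a3, a4)

/-- `T1 := π s0 s2 s3 s4 s3 s2 s0` (apply `π` first, then `s0`, …, then `s0`). -/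
def T1A7 : P5 → P5 := s0A7 ∘ s2A7 ∘ s3A7 ∘ s4A7 ∘ s3A7 ∘ s2A7 ∘ s0A7 ∘ piA7

/-- `T2 := s0 T1 s0`. -/
def T2A7 : P5 → P5 := s0A7 ∘ T1A7 ∘ s0A7

/-- `T3 := s2 T2 s2`. -/
def T3A7 : P5 → P5 := s2A7 ∘ T2A7 ∘ s2A7

/-- `T4 := s4 s3 T3 s3 s4`. -/
def T4A7 : P5 → P5 := s4A7 ∘ s3A7 ∘ T3A7 ∘ s3A7 ∘ s4A7

theorem translations_A7 (a0 a1 a2 a3 a4 : ℂ)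
    (hrel : a0 + a1 + 2*a2 + 2*a3 + a4 = 1) :
    T1A7 (a0, a1, a2, a3, a4) = (a0 - 1, a1 + 1, a2, a3, a4) ∧
    T2A7 (a0, a1, a2, a3, a4) = (a0 + 1, a1 + 1, a2 - 1, a3, a4) ∧
    T3A7 (a0, a1, a2, a3, a4) = (a0, a1, a2 + 1, a3 - 1, a4) ∧
    T4A7 (a0, a1, a2, a3, a4) = (a0, a1, a2, a3 - 1, a4 + 2) := by
  have h4 : a4 = 1 - a0 - a1 - 2*a2 - 2*a3 := by linear_combination hrel
  subst h4
  refine ⟨?_, ?_, ?_, ?_⟩ <;>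
    simp only [T1A7, T2A7, T3A7, T4A7, s0A7, s1A7, s2A7, s3A7, s4A7, piA7,
      Function.comp_apply, Prod.mk.injEq] <;> refine ⟨by ring, by ring, by ring, by ring, by ring⟩
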